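/- arXiv:1712.02848 — 2 statements merged into one kernel-verified Lean document; each statement's English description precedes it below -/
import Mathlib

section
/- Let K be a complex Hilbert space, P an orthogonal projection on K, s_h(T) := S_h T S_h with S_h := h^{-1/2}(I − P) + P for h > 0, and let Q ∈ B(K). Suppose (P(h,n))_{h>0, n∈ℕ} is a family in B(K) such that ‖n·s_h(P(h,n) − I) − Q‖ → 0 along the product filter of (h → 0 within (0,∞)) and (n → ∞). Then ‖s_h(P(h,n)ⁿ − I) − F[Q]‖ → 0 along the same product filter, where F[Q] := Q + Q·P·e₂(PQP)·P·Q is the Holevo transform of Q. -/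
open ContinuousLinearMap Filter Topology

noncomputable section

/-- The operator `S_h = h^{-1/2}(I - P) + P`. -/
def scaleOp {K : Type*} [NormedAddCommGroup K] [InnerProductSpace ℂ K]
    (P : K →L[ℂ] K) (h : ℝ) : K →L[ℂ] K :=
  ((Real.sqrt h : ℂ))⁻¹ • (1 - P) + P

/-- The scaling map `s_h(T) = S_h T S_h`. -/
def scal {K : Type*} [NormedAddCommGroup K] [InnerProductSpace ℂ K]
    (P : K →L[ℂ] K) (h : ℝ) (T : K →L[ℂ] K) : K →L[ℂ] K :=
  scaleOp P h * T * scaleOp P h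

/-- `e₂(T) = ∑_{n≥0} Tⁿ/(n+2)!`. -/
def e2 {K : Type*} [NormedAddCommGroup K] [InnerProductSpace ℂ K]
    (T : K →L[ℂ] K) : K →L[ℂ] K :=
  ∑' n : ℕ, (((n + 2).factorial : ℂ))⁻¹ • T ^ n

/-- The Holevo transform `F[Q] = Q + Q·P·e₂(PQP)·P·Q`. -/
def holevo {K : Type*} [NormedAddCommGroup K] [InnerProductSpace ℂ K]
    (P : K →L[ℂ] K) (Q : K →L[ℂ] K) : K →L[ℂ] K :=
  Q + Q * P * e2 (P * Q * P) * P * Q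

/-!
Put `T := √h (1 - P) + P = S_h⁻¹` and `A := n · s_h(P(h,n) - 1)`. Then `P(h,n) = 1 + n⁻¹ T A T`,
and the binomial theorem gives
`s_h(P(h,n)ⁿ - 1) = ∑_{k<n} C(n, k+1) n^{-(k+1)} A (T² A)ᵏ`, where `T² = h (1 - P) + P → P`.
The coefficients tend to `1/(k+1)!` and are bounded by it, so by dominated convergence the sum
tends to `∑ₖ Q (PQ)ᵏ / (k+1)!`, which is `F[Q]` because `Q P (PQP)ⁿ P Q = Q (PQ)ⁿ⁺¹`.
-/

open Finset
open scoped Nat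

section Algebraic

variable {𝕜 R : Type*} [Field 𝕜] [Ring R] [Algebra 𝕜 R]

/-- `scaleOp P h` is `dilation P (√h)⁻¹`. -/
def dilation (P : R) (c : 𝕜) : R := c • (1 - P) + P

theorem IsIdempotentElem.dilation_mul_dilation {P : R} (hP : IsIdempotentElem P) (a b : 𝕜) :
    dilation P a * dilation P b = dilation P (a * b) := by
  simp only [dilation, add_mul, mul_add, smul_mul_assoc, mul_smul_comm, smul_smul,
    hP.one_sub.eq, hP.one_sub_mul_self, hP.mul_one_sub_self, hP.eq, smul_zero, add_zero,
    zero_add, mul_comm b a]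

theorem dilation_one (P : R) : dilation P (1 : 𝕜) = 1 := by
  simp [dilation]

theorem add_one_pow_sub_one (X : R) (n : ℕ) :
    (X + 1) ^ n - 1 = ∑ m ∈ range n, n.choose (m + 1) • X ^ (m + 1) := by
  rw [(Commute.one_right X).add_pow, sum_range_succ', add_sub_assoc]
  simp [← Nat.cast_comm, nsmul_eq_mul]

theorem sandwich_pow_succ (T x : R) (k : ℕ) :
    (T * x * T) ^ (k + 1) = T * (x * (T * T * x) ^ k) * T := by
  rw [pow_succ, ← mul_assoc, mul_pow_mul]
  simp only [mul_assoc]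

theorem sandwich_pow_sub_one_eq_sum {S T : R} (hST : S * T = 1) (hTS : T * S = 1) {n : ℕ}
    (hn : (n : 𝕜) ≠ 0) {X A : R} (hA : (n : 𝕜) • (S * (X - 1) * S) = A) :
    S * (X ^ n - 1) * S =
      ∑ k ∈ range n, ((n.choose (k + 1) : 𝕜) / (n : 𝕜) ^ (k + 1)) •
        (A * (T * T * A) ^ k) := by
  have hsandwich : ∀ y, S * (T * y * T) * S = y := fun y => by
    simp only [← mul_assoc, hST, one_mul]; rw [mul_assoc, hTS, mul_one]
  have hX : X - 1 = (n : 𝕜)⁻¹ • (T * A * T) := by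
    rw [← hA, mul_smul_comm, smul_mul_assoc, smul_smul, inv_mul_cancel₀ hn, one_smul]
    simp only [← mul_assoc, hTS, one_mul]; rw [mul_assoc, hST, mul_one]
  calc S * (X ^ n - 1) * S = S * ((X - 1 + 1) ^ n - 1) * S := by rw [sub_add_cancel]
    _ = ∑ k ∈ range n, n.choose (k + 1) • (S * (X - 1) ^ (k + 1) * S) := by
      simp only [add_one_pow_sub_one, mul_sum, sum_mul, mul_smul_comm, smul_mul_assoc]
    _ = _ := sum_congr rfl fun k _ => by
      rw [hX, smul_pow, mul_smul_comm, smul_mul_assoc, sandwich_pow_succ, hsandwich,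
        ← Nat.cast_smul_eq_nsmul 𝕜, smul_smul, inv_pow, div_eq_mul_inv]

theorem IsIdempotentElem.mul_mul_pow_mul_mul {P : R} (hP : IsIdempotentElem P) (Q : R) (n : ℕ) :
    Q * P * (P * Q * P) ^ n * P * Q = Q * (P * Q) ^ (n + 1) := by
  have hpow : (P * Q * P) ^ n * P = P * (Q * P) ^ n := by
    rw [mul_assoc P Q P, mul_pow_mul, mul_assoc Q P P, hP.eq]
  calc Q * P * (P * Q * P) ^ n * P * Q = Q * P * ((P * Q * P) ^ n * P) * Q := by
        simp only [mul_assoc]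
    _ = (Q * P) ^ (n + 1) * Q := by
        rw [hpow, pow_succ', ← mul_assoc, mul_assoc Q P P, hP.eq]
    _ = Q * (P * Q) ^ (n + 1) := mul_pow_mul Q P (n + 1)

end Algebraic

theorem Nat.choose_div_pow_le_inv_factorial {α : Type*} [Field α] [LinearOrder α]
    [IsStrictOrderedRing α] (n r : ℕ) : (n.choose r : α) / (n : α) ^ r ≤ (r ! : α)⁻¹ :=
  calc (n.choose r : α) / (n : α) ^ r ≤ ((n : α) ^ r / r !) / (n : α) ^ r := by
        gcongr; exact Nat.choose_le_pow_div r n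
    _ = (r ! : α)⁻¹ * ((n : α) ^ r / (n : α) ^ r) := by ring
    _ ≤ (r ! : α)⁻¹ := mul_le_of_le_one_right (by positivity) (div_self_le_one _)

theorem norm_mul_mul_pow_le {R : Type*} [SeminormedRing R] (a b : R) (k : ℕ) :
    ‖a * (b * a) ^ k‖ ≤ ‖a‖ * (‖b‖ * ‖a‖) ^ k := by
  induction k with
  | zero => simp
  | succ k ih =>
    calc ‖a * (b * a) ^ (k + 1)‖ ≤ ‖a * (b * a) ^ k‖ * ‖b * a‖ := by
          rw [pow_succ, ← mul_assoc]; exact norm_mul_le _ _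
      _ ≤ ‖a‖ * (‖b‖ * ‖a‖) ^ k * (‖b‖ * ‖a‖) := by
          gcongr; exact norm_mul_le b a
      _ = ‖a‖ * (‖b‖ * ‖a‖) ^ (k + 1) := by ring

section NormedAlgebra

variable {𝕜 R : Type*} [RCLike 𝕜] [NormedRing R] [NormedAlgebra 𝕜 R]

theorem norm_choose_div_pow_le_inv_factorial (n r : ℕ) :
    ‖(n.choose r : 𝕜) / (n : 𝕜) ^ r‖ ≤ (r ! : ℝ)⁻¹ := by
  simpa using Nat.choose_div_pow_le_inv_factorial (α := ℝ) n r

theorem tendsto_choose_div_pow_atTop (r : ℕ) :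
    Tendsto (fun n : ℕ => (n.choose r : 𝕜) / (n : 𝕜) ^ r) atTop (𝓝 (r ! : 𝕜)⁻¹) := by
  have hone : Tendsto (fun n : ℕ => (n : ℝ) * (n : ℝ)⁻¹) atTop (𝓝 1) :=
    tendsto_const_nhds.congr' <| by
      filter_upwards [eventually_ne_atTop 0] with n hn
      field_simp
  have hreal := ProbabilityTheory.tendsto_choose_mul_pow_atTop r hone
  simpa [Function.comp_def, div_eq_mul_inv, inv_pow] using
    (RCLike.continuous_ofReal (K := 𝕜)).tendsto _ |>.comp hreal

variable [CompleteSpace R]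

theorem summable_inv_factorial_add_smul_pow (j : ℕ) (x : R) :
    Summable fun n => (((n + j)! : 𝕜))⁻¹ • x ^ n := by
  refine Summable.of_norm_bounded (NormedSpace.norm_expSeries_summable' (𝕂 := 𝕜) x)
    fun n => ?_
  rw [norm_smul, norm_smul]
  gcongr
  simp only [norm_inv, RCLike.norm_natCast]
  gcongr
  exact Nat.le_add_right n j

theorem tendsto_sum_choose_div_pow_smul {ι : Type*} {l : Filter ι} {A M : ι → R}
    {N : ι → ℕ} {P Q : R} (hA : Tendsto A l (𝓝 Q)) (hM : Tendsto M l (𝓝 P))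
    (hN : Tendsto N l atTop) :
    Tendsto (fun i => ∑ k ∈ range (N i), ((N i).choose (k + 1) / (N i : 𝕜) ^ (k + 1)) •
        (A i * (M i * A i) ^ k)) l (𝓝 (∑' k, ((k + 1)! : 𝕜)⁻¹ • (Q * (P * Q) ^ k))) := by
  have hfinite : ∀ i, ∑ k ∈ range (N i), ((N i).choose (k + 1) / (N i : 𝕜) ^ (k + 1)) •
      (A i * (M i * A i) ^ k) = ∑' k, ((N i).choose (k + 1) / (N i : 𝕜) ^ (k + 1)) •
      (A i * (M i * A i) ^ k) := fun i => by
    refine (tsum_eq_sum fun k hk => ?_).symm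
    rw [Nat.choose_eq_zero_of_lt (by simpa using hk), Nat.cast_zero, zero_div, zero_smul]
  simp only [hfinite]
  set C := ‖Q‖ + 1
  set D := ‖P‖ + 1
  refine tendsto_tsum_of_dominated_convergence
    ((Real.summable_pow_div_factorial (D * C)).mul_left C)
    (fun k => ((tendsto_choose_div_pow_atTop (k + 1)).comp hN).smul
      (hA.mul ((hM.mul hA).pow k))) ?_
  filter_upwards [hA.norm.eventually_le_const (lt_add_one ‖Q‖),
    hM.norm.eventually_le_const (lt_add_one ‖P‖)] with i hAi hMi k
  calc _ ≤ ((k + 1)! : ℝ)⁻¹ * (‖A i‖ * (‖M i‖ * ‖A i‖) ^ k) := by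
        rw [norm_smul]
        exact mul_le_mul (norm_choose_div_pow_le_inv_factorial _ _) (norm_mul_mul_pow_le _ _ _)
          (norm_nonneg _) (by positivity)
    _ ≤ (k ! : ℝ)⁻¹ * (C * (D * C) ^ k) := by
        gcongr
        exact Nat.le_succ k
    _ = C * ((D * C) ^ k / k !) := by ring

end NormedAlgebra

section Operators

variable {K : Type*} [NormedAddCommGroup K] [InnerProductSpace ℂ K]

theorem scal_pow_sub_one_eq_sum {P : K →L[ℂ] K} (hP : IsIdempotentElem P) {h : ℝ} (hh : 0 < h)
    {n : ℕ} (hn : n ≠ 0) (X : K →L[ℂ] K) :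
    scal P h (X ^ n - 1) = ∑ k ∈ range n, ((n.choose (k + 1) : ℂ) / (n : ℂ) ^ (k + 1)) •
      ((n : ℂ) • scal P h (X - 1) *
        (dilation P (h : ℂ) * ((n : ℂ) • scal P h (X - 1))) ^ k) := by
  set c : ℂ := (Real.sqrt h : ℂ)
  have hc : c ≠ 0 := Complex.ofReal_ne_zero.mpr (Real.sqrt_pos.mpr hh).ne'
  have hST : dilation P c⁻¹ * dilation P c = 1 := by
    rw [hP.dilation_mul_dilation, inv_mul_cancel₀ hc, dilation_one]
  have hTS : dilation P c * dilation P c⁻¹ = 1 := by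
    rw [hP.dilation_mul_dilation, mul_inv_cancel₀ hc, dilation_one]
  have hTT : dilation P c * dilation P c = dilation P (h : ℂ) := by
    rw [hP.dilation_mul_dilation, ← Complex.ofReal_mul, Real.mul_self_sqrt hh.le]
  rw [← hTT]
  exact sandwich_pow_sub_one_eq_sum hST hTS (Nat.cast_ne_zero.mpr hn) rfl

theorem holevo_eq_tsum [CompleteSpace K] {P : K →L[ℂ] K} (hP : IsIdempotentElem P)
    (Q : K →L[ℂ] K) : holevo P Q = ∑' k, ((k + 1)! : ℂ)⁻¹ • (Q * (P * Q) ^ k) := by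
  set L := mulLeftRight ℂ (K →L[ℂ] K) (Q * P) (P * Q)
  have hsum := summable_inv_factorial_add_smul_pow (𝕜 := ℂ) 2 (P * Q * P)
  have hshift : ∀ n, L (((n + 2)! : ℂ)⁻¹ • (P * Q * P) ^ n) =
      ((n + 1 + 1)! : ℂ)⁻¹ • (Q * (P * Q) ^ (n + 1)) := fun n => by
    rw [map_smul, mulLeftRight_apply, ← mul_assoc, hP.mul_mul_pow_mul_mul]
  rw [tsum_eq_zero_add' ((hsum.mapL L).congr hshift), ← tsum_congr hshift, ← L.map_tsum hsum]
  simp [holevo, e2, L, mul_assoc]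

end Operators

theorem scaled_powers_converge_to_holevo_transform_general
    {K : Type*} [NormedAddCommGroup K] [InnerProductSpace ℂ K] [CompleteSpace K]
    (P : K →L[ℂ] K) (hP2 : P * P = P)
    (Q : K →L[ℂ] K) (Phn : ℝ → ℕ → K →L[ℂ] K)
    (hcgce : Tendsto (fun p : ℝ × ℕ => ‖(p.2 : ℂ) • scal P p.1 (Phn p.1 p.2 - 1) - Q‖)
      ((𝓝[>] (0:ℝ)) ×ˢ (atTop : Filter ℕ)) (𝓝 0)) :
    Tendsto (fun p : ℝ × ℕ => ‖scal P p.1 (Phn p.1 p.2 ^ p.2 - 1) - holevo P Q‖)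
      ((𝓝[>] (0:ℝ)) ×ˢ (atTop : Filter ℕ)) (𝓝 0) := by
  have hP : IsIdempotentElem P := hP2
  have hA := tendsto_iff_norm_sub_tendsto_zero.mpr hcgce
  have hM : Tendsto (fun p : ℝ × ℕ => dilation P (p.1 : ℂ)) ((𝓝[>] 0) ×ˢ atTop) (𝓝 P) := by
    have hcont : Continuous fun t : ℝ => dilation P (t : ℂ) := by unfold dilation; fun_prop
    simpa [Function.comp_def, dilation] using
      ((hcont.tendsto 0).mono_left nhdsWithin_le_nhds).comp tendsto_fst
  rw [holevo_eq_tsum hP]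
  refine tendsto_iff_norm_sub_tendsto_zero.mp <|
    (tendsto_sum_choose_div_pow_smul hA hM tendsto_snd).congr' ?_
  filter_upwards [prod_mem_prod self_mem_nhdsWithin (eventually_ne_atTop 0)]
    with ⟨h, n⟩ ⟨hh, hn⟩
  exact (scal_pow_sub_one_eq_sum hP hh hn (Phn h n)).symm

theorem scaled_powers_converge_to_holevo_transform
    {K : Type*} [NormedAddCommGroup K] [InnerProductSpace ℂ K] [CompleteSpace K]
    (P : K →L[ℂ] K) (hP : IsSelfAdjoint P) (hP2 : P * P = P)
    (Q : K →L[ℂ] K) (Phn : ℝ → ℕ → K →L[ℂ] K)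
    (hcgce : Tendsto (fun p : ℝ × ℕ => ‖(p.2 : ℂ) • scal P p.1 (Phn p.1 p.2 - 1) - Q‖)
      ((𝓝[>] (0:ℝ)) ×ˢ (atTop : Filter ℕ)) (𝓝 0)) :
    Tendsto (fun p : ℝ × ℕ => ‖scal P p.1 (Phn p.1 p.2 ^ p.2 - 1) - holevo P Q‖)
      ((𝓝[>] (0:ℝ)) ×ˢ (atTop : Filter ℕ)) (𝓝 0) :=
  scaled_powers_converge_to_holevo_transform_general P hP2 Q Phn hcgce
end
end

section
/- Let K be a complex Hilbert space, P an orthogonal projection on K, s_h(T) := S_h T S_h with S_h := h^{-1/2}(I − P) + P for h > 0. Suppose that for i = 1, 2 the families (Q_i(h))_{h>0} in B(K) and operators Q_i ∈ B(K) satisfy ‖s_h(Q_i(h)) − Q_i‖ → 0 as h → 0. Then ‖s_h(exp(Q₁(h) + Q₂(h)) − I) − F[Q₁ + Q₂]‖ → 0 and ‖s_h(exp(Q₁(h))·exp(Q₂(h)) − I) − F[Q₁] ◁ F[Q₂]‖ → 0 as h → 0, where F[Q] := Q + Q·P·e₂(PQP)·P·Q is the Holevo transform and F₁ ◁ F₂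 := F₁ + F₂ + F₁ P F₂ is the series product. -/
/-!
For `h > 0` the inverse of `S_h` is `S_{1/h} = √h (1 - P) + P`, which tends to `P` as `h → 0`.
Hence `Q(h) = S_{1/h} s_h(Q(h)) S_{1/h} → PQP`, and `s_h(XYZ) = s_h(X) (S_{1/h} Y S_{1/h}) s_h(Z)`
turns `exp T - 1 = T + T e₂(T) T` into `s_h(exp Q(h) - 1) → Q + Q P e₂(PQP) P Q`, using that `e₂`
is a power series of infinite radius and hence continuous. In the same way
`s_h((1 + X)(1 + Y) - 1) = s_h(X) + s_h(Y) + s_h(X) S_{1/h}² s_h(Y)` gives the series product.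
-/

open ContinuousLinearMap Filter Topology

noncomputable section

/-- The series product `F₁ ◁ F₂ = F₁ + F₂ + F₁ P F₂`. -/
def seriesProd {K : Type*} [NormedAddCommGroup K] [InnerProductSpace ℂ K]
    (P : K →L[ℂ] K) (F₁ F₂ : K →L[ℂ] K) : K →L[ℂ] K :=
  F₁ + F₂ + F₁ * P * F₂

open FormalMultilinearSeries

theorem IsIdempotentElem.smul_one_sub_add_mul_smul_one_sub_add {R A : Type*} [CommSemiring R]
    [Ring A] [Algebra R A] {p : A} (hp : IsIdempotentElem p) (a b : R) :
    (a • (1 - p) + p) * (b • (1 - p) + p) = (a * b) • (1 - p) + p := by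
  simp only [add_mul, mul_add, smul_mul_assoc, mul_smul_comm, smul_smul, mul_comm b a,
    hp.one_sub.eq, hp.eq, hp.one_sub_mul_self, hp.mul_one_sub_self, smul_zero, add_zero, zero_add]

section Scaling

variable {K : Type*} [NormedAddCommGroup K] [InnerProductSpace ℂ K] {P : K →L[ℂ] K} {h : ℝ}

theorem scaleOp_inv_eq (P : K →L[ℂ] K) (h : ℝ) :
    scaleOp P h⁻¹ = (Real.sqrt h : ℂ) • (1 - P) + P := by
  rw [scaleOp, Real.sqrt_inv, Complex.ofReal_inv, inv_inv]

theorem scaleOp_mul_scaleOp_inv (hP : IsIdempotentElem P) (hh : 0 < h) :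
    scaleOp P h * scaleOp P h⁻¹ = 1 := by
  have hs : (Real.sqrt h : ℂ) ≠ 0 := by exact_mod_cast (Real.sqrt_pos.mpr hh).ne'
  rw [scaleOp_inv_eq, scaleOp, hP.smul_one_sub_add_mul_smul_one_sub_add, inv_mul_cancel₀ hs,
    one_smul, sub_add_cancel]

theorem scaleOp_inv_mul_scaleOp (hP : IsIdempotentElem P) (hh : 0 < h) :
    scaleOp P h⁻¹ * scaleOp P h = 1 := by
  have hs : (Real.sqrt h : ℂ) ≠ 0 := by exact_mod_cast (Real.sqrt_pos.mpr hh).ne'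
  rw [scaleOp_inv_eq, scaleOp, hP.smul_one_sub_add_mul_smul_one_sub_add, mul_inv_cancel₀ hs,
    one_smul, sub_add_cancel]

theorem scal_add (P : K →L[ℂ] K) (h : ℝ) (A B : K →L[ℂ] K) :
    scal P h (A + B) = scal P h A + scal P h B := by
  simp only [scal, mul_add, add_mul]

theorem scal_mul_mul (hP : IsIdempotentElem P) (hh : 0 < h) (X Y Z : K →L[ℂ] K) :
    scal P h (X * Y * Z) = scal P h X * (scaleOp P h⁻¹ * Y * scaleOp P h⁻¹) * scal P h Z := by
  have hSR (A : K →L[ℂ] K) : scaleOp P h * (scaleOp P h⁻¹ * A) = A := by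
    rw [← mul_assoc, scaleOp_mul_scaleOp_inv hP hh, one_mul]
  have hRS (A : K →L[ℂ] K) : scaleOp P h⁻¹ * (scaleOp P h * A) = A := by
    rw [← mul_assoc, scaleOp_inv_mul_scaleOp hP hh, one_mul]
  simp only [scal, mul_assoc, hSR, hRS]

theorem scaleOp_inv_mul_scal_mul_scaleOp_inv (hP : IsIdempotentElem P) (hh : 0 < h)
    (T : K →L[ℂ] K) : scaleOp P h⁻¹ * scal P h T * scaleOp P h⁻¹ = T := by
  rw [scal, ← mul_assoc, ← mul_assoc, scaleOp_inv_mul_scaleOp hP hh, one_mul, mul_assoc,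
    scaleOp_mul_scaleOp_inv hP hh, mul_one]

theorem tendsto_scaleOp_inv (P : K →L[ℂ] K) :
    Tendsto (fun h : ℝ => scaleOp P h⁻¹) (𝓝[>] 0) (𝓝 P) := by
  have hcont : Continuous fun h : ℝ => (Real.sqrt h : ℂ) • (1 - P) + P := by fun_prop
  simpa only [scaleOp_inv_eq, Real.sqrt_zero, Complex.ofReal_zero, zero_smul, zero_add] using
    (hcont.tendsto 0).mono_left nhdsWithin_le_nhds

end Scaling

section E2Series

variable (𝔸 : Type*) [NormedRing 𝔸] [NormedAlgebra ℂ 𝔸]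

def e2Series : FormalMultilinearSeries ℂ 𝔸 𝔸 :=
  ofScalars 𝔸 fun n => ((n + 2).factorial : ℂ)⁻¹

theorem e2Series_radius : (e2Series 𝔸).radius = ⊤ := by
  refine ofScalars_radius_eq_top_of_tendsto _ _
    (.of_forall fun n => inv_ne_zero (Nat.cast_ne_zero.mpr (Nat.factorial_ne_zero _))) ?_
  have hratio : (fun n : ℕ => ‖((n.succ + 2).factorial : ℂ)⁻¹‖ / ‖((n + 2).factorial : ℂ)⁻¹‖)
      = fun n : ℕ => ((n : ℝ) + 3)⁻¹ := by
    funext n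
    rw [norm_inv, norm_inv, Complex.norm_natCast, Complex.norm_natCast,
      show n.succ + 2 = (n + 2) + 1 by omega, Nat.factorial_succ]
    push_cast
    field_simp
    ring
  rw [hratio]
  exact tendsto_inv_atTop_zero.comp (tendsto_atTop_add_const_right _ _ tendsto_natCast_atTop_atTop)

end E2Series

section E2

variable {K : Type*} [NormedAddCommGroup K] [InnerProductSpace ℂ K] [CompleteSpace K]

theorem e2_eq_e2Series_sum (T : K →L[ℂ] K) : e2 T = (e2Series (K →L[ℂ] K)).sum T :=
  (ofScalars_sum_eq _ T).symm

theorem hasSum_e2 (T : K →L[ℂ] K) :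
    HasSum (fun n => ((n + 2).factorial : ℂ)⁻¹ • T ^ n) (e2 T) := by
  rw [e2_eq_e2Series_sum]
  simpa only [e2Series, ofScalars_apply_eq] using
    (e2Series (K →L[ℂ] K)).hasSum (x := T) (by simp [e2Series_radius])

theorem continuous_e2 : Continuous (e2 : (K →L[ℂ] K) → K →L[ℂ] K) := by
  rw [funext e2_eq_e2Series_sum, ← continuousOn_univ, ← Metric.eball_top_eq_univ (0 : K →L[ℂ] K),
    ← e2Series_radius (K →L[ℂ] K)]
  exact (e2Series (K →L[ℂ] K)).continuousOn

theorem exp_sub_one_eq_add_mul_e2_mul (T : K →L[ℂ] K) :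
    NormedSpace.exp T - 1 = T + T * e2 T * T := by
  have hexp := (hasSum_nat_add_iff' 2).mpr (NormedSpace.exp_series_hasSum_exp' (𝕂 := ℂ) T)
  have he2 := ((hasSum_e2 T).mul_left T).mul_right T
  simp only [mul_smul_comm, smul_mul_assoc, ← pow_succ', ← pow_succ] at he2
  rw [he2.unique hexp, Finset.sum_range_succ, Finset.sum_range_one]
  simp only [Nat.factorial_zero, Nat.factorial_one, Nat.cast_one, inv_one, one_smul, pow_zero, pow_one]
  abel

end E2

section ScalingLimits

variable {K : Type*} [NormedAddCommGroup K] [InnerProductSpace ℂ K] {P : K →L[ℂ] K}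

theorem tendsto_scal_exp_sub_one [CompleteSpace K] (hP : IsIdempotentElem P) {Q : K →L[ℂ] K}
    {Qh : ℝ → K →L[ℂ] K} (hQ : Tendsto (fun h => scal P h (Qh h)) (𝓝[>] 0) (𝓝 Q)) :
    Tendsto (fun h => scal P h (NormedSpace.exp (Qh h) - 1)) (𝓝[>] 0) (𝓝 (holevo P Q)) := by
  have hpos : ∀ᶠ h : ℝ in 𝓝[>] 0, 0 < h := eventually_mem_nhdsWithin
  have hR := tendsto_scaleOp_inv P
  have hQh : Tendsto Qh (𝓝[>] 0) (𝓝 (P * Q * P)) :=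
    ((hR.mul hQ).mul hR).congr' <| hpos.mono fun h hh =>
      scaleOp_inv_mul_scal_mul_scaleOp_inv hP hh (Qh h)
  have hlim := hQ.add ((hQ.mul ((hR.mul ((continuous_e2.tendsto _).comp hQh)).mul hR)).mul hQ)
  simp only [← mul_assoc] at hlim
  refine hlim.congr' (hpos.mono fun h hh => ?_)
  dsimp only
  rw [exp_sub_one_eq_add_mul_e2_mul, scal_add, scal_mul_mul hP hh]
  simp only [mul_assoc, Function.comp_apply]

theorem tendsto_scal_one_add_mul_one_add_sub_one (hP : IsIdempotentElem P) {F₁ F₂ : K →L[ℂ] K}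
    {X Y : ℝ → K →L[ℂ] K} (hX : Tendsto (fun h => scal P h (X h)) (𝓝[>] 0) (𝓝 F₁))
    (hY : Tendsto (fun h => scal P h (Y h)) (𝓝[>] 0) (𝓝 F₂)) :
    Tendsto (fun h => scal P h ((1 + X h) * (1 + Y h) - 1)) (𝓝[>] 0)
      (𝓝 (seriesProd P F₁ F₂)) := by
  have hpos : ∀ᶠ h : ℝ in 𝓝[>] 0, 0 < h := eventually_mem_nhdsWithin
  have hR := tendsto_scaleOp_inv P
  have hlim := (hX.add hY).add ((hX.mul (hR.mul hR)).mul hY)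
  rw [hP.eq] at hlim
  refine hlim.congr' (hpos.mono fun h hh => ?_)
  dsimp only
  rw [show (1 + X h) * (1 + Y h) - 1 = X h + Y h + X h * 1 * Y h by noncomm_ring,
    scal_add, scal_add, scal_mul_mul hP hh, mul_one]

end ScalingLimits

theorem scaled_products_of_exponentials_converge_general
    {K : Type*} [NormedAddCommGroup K] [InnerProductSpace ℂ K] [CompleteSpace K]
    (P : K →L[ℂ] K) (hP2 : P * P = P)
    (Q₁ Q₂ : K →L[ℂ] K) (Q₁h Q₂h : ℝ → K →L[ℂ] K)
    (h1 : Tendsto (fun h : ℝ => ‖scal P h (Q₁h h) - Q₁‖) (𝓝[>] 0) (𝓝 0))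
    (h2 : Tendsto (fun h : ℝ => ‖scal P h (Q₂h h) - Q₂‖) (𝓝[>] 0) (𝓝 0)) :
    Tendsto (fun h : ℝ =>
        ‖scal P h (NormedSpace.exp (Q₁h h + Q₂h h) - 1) - holevo P (Q₁ + Q₂)‖)
      (𝓝[>] 0) (𝓝 0) ∧
    Tendsto (fun h : ℝ =>
        ‖scal P h (NormedSpace.exp (Q₁h h) * NormedSpace.exp (Q₂h h) - 1) -
          seriesProd P (holevo P Q₁) (holevo P Q₂)‖)
      (𝓝[>] 0) (𝓝 0) := by
  have hQ₁ := tendsto_iff_norm_sub_tendsto_zero.mpr h1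
  have hQ₂ := tendsto_iff_norm_sub_tendsto_zero.mpr h2
  have hQ : Tendsto (fun h => scal P h (Q₁h h + Q₂h h)) (𝓝[>] 0) (𝓝 (Q₁ + Q₂)) := by
    simpa only [scal_add] using hQ₁.add hQ₂
  refine ⟨tendsto_iff_norm_sub_tendsto_zero.mp (tendsto_scal_exp_sub_one hP2 hQ),
    tendsto_iff_norm_sub_tendsto_zero.mp ?_⟩
  simpa only [add_sub_cancel] using tendsto_scal_one_add_mul_one_add_sub_one hP2
    (tendsto_scal_exp_sub_one hP2 hQ₁) (tendsto_scal_exp_sub_one hP2 hQ₂)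

theorem scaled_products_of_exponentials_converge
    {K : Type*} [NormedAddCommGroup K] [InnerProductSpace ℂ K] [CompleteSpace K]
    (P : K →L[ℂ] K) (hP : IsSelfAdjoint P) (hP2 : P * P = P)
    (Q₁ Q₂ : K →L[ℂ] K) (Q₁h Q₂h : ℝ → K →L[ℂ] K)
    (h1 : Tendsto (fun h : ℝ => ‖scal P h (Q₁h h) - Q₁‖) (𝓝[>] 0) (𝓝 0))
    (h2 : Tendsto (fun h : ℝ => ‖scal P h (Q₂h h) - Q₂‖) (𝓝[>] 0) (𝓝 0)) :
    Tendsto (fun h : ℝ =>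
        ‖scal P h (NormedSpace.exp (Q₁h h + Q₂h h) - 1) - holevo P (Q₁ + Q₂)‖)
      (𝓝[>] 0) (𝓝 0) ∧
    Tendsto (fun h : ℝ =>
        ‖scal P h (NormedSpace.exp (Q₁h h) * NormedSpace.exp (Q₂h h) - 1) -
          seriesProd P (holevo P Q₁) (holevo P Q₂)‖)
      (𝓝[>] 0) (𝓝 0) :=
  scaled_products_of_exponentials_converge_general P hP2 Q₁ Q₂ Q₁h Q₂h h1 h2
end
end
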